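/- arXiv:1903.04621 — 2 statements merged into one kernel-verified Lean document; each statement's English description precedes it below -/
import Mathlib

section
/- Let V be a finite set of cell indices, E ⊆ V × V a symmetric relation (the dual faces: (i,j) ∈ E iff (j,i) ∈ E, with no self-pairs), u : V × V → ℝ with u(i,j) = u(j,i) for all (i,j) ∈ E (symmetric face degrees of freedom), μ : V × V → ℝ with μ(i,j) = -μ(j,i) for all (i,j) ∈ E (antisymmetric oriented face measures), β : V → ℝ (boundary flux terms, zero for interior cells), and μ_i > 0 for each i ∈ V (cell volumes). Define the discrete divergence by μ_i·(DIV u)_i := ∑_{j : (i,j) ∈ E} u(i,j)·μ(i,j) + β_i. Then for every subset ω ⊆ V: ∑_{i ∈ ω} μ_i·(DIV u)_i = ∑_{(i,j) ∈ E, i ∈ ω, j ∉ ω} u(i,j)·μ(i,j) + ∑_{i ∈ ω} β_i. That is, the volume-weighted sum of discrete divergences over any union of cells equals the total discrete flux through the faces separating ω from its complement plus the physical boundary flux terms of the cells in ω (local conservation). -/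
/-- Local conservation of the mesh-based mimetic divergence: for symmetric face values `u`,
antisymmetric oriented face measures `μ`, boundary flux terms `β`, and positive cell
volumes `vol`, the volume-weighted sum of discrete divergences over any subset `ω` of cells
equals the flux through the faces crossing the boundary of `ω` plus the boundary terms. -/
theorem stmt_1 {V : Type*} [Fintype V] [DecidableEq V]
    (E : V → V → Prop) [DecidableRel E]
    (hEsymm : ∀ i j, E i j → E j i) (hEirr : ∀ i, ¬ E i i)
    (u : V → V → ℝ) (hu : ∀ i j, E i j → u i j = u j i)
    (μ : V → V → ℝ) (hμ : ∀ i j, E i j → μ i j = - μ j i)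
    (β : V → ℝ) (vol : V → ℝ) (hvol : ∀ i, 0 < vol i)
    (DIV : V → ℝ)
    (hDIV : ∀ i, vol i * DIV i =
      (∑ j ∈ Finset.univ.filter (fun j => E i j), u i j * μ i j) + β i)
    (ω : Finset V) :
    ∑ i ∈ ω, vol i * DIV i =
      (∑ i ∈ ω, ∑ j ∈ Finset.univ.filter (fun j => E i j ∧ j ∉ ω), u i j * μ i j)
        + ∑ i ∈ ω, β i := by
  have key : ∀ i, ∑ j ∈ Finset.univ.filter (fun j => E i j), u i j * μ i j
      = (∑ j ∈ Finset.univ.filter (fun j => E i j ∧ j ∈ ω), u i j * μ i j)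
        + ∑ j ∈ Finset.univ.filter (fun j => E i j ∧ j ∉ ω), u i j * μ i j := by
    intro i
    rw [← Finset.sum_union]
    · apply Finset.sum_congr _ (fun _ _ => rfl)
      ext j
      simp only [Finset.mem_union, Finset.mem_filter, Finset.mem_univ, true_and]
      tauto
    · rw [Finset.disjoint_left]
      intro j hj hj'
      simp only [Finset.mem_filter, Finset.mem_univ, true_and] at hj hj'
      exact hj'.2 hj.2
  have interior : ∑ i ∈ ω, ∑ j ∈ Finset.univ.filter (fun j => E i j ∧ j ∈ ω),
      u i j * μ i j = 0 := by
    have hrw : ∀ i ∈ ω, ∑ j ∈ Finset.univ.filter (fun j => E i j ∧ j ∈ ω), u i j * μ i j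
        = ∑ j ∈ ω, if E i j then u i j * μ i j else 0 := by
      intro i _
      rw [Finset.sum_ite, Finset.sum_const_zero, add_zero]
      apply Finset.sum_congr _ (fun _ _ => rfl)
      ext j
      simp only [Finset.mem_filter, Finset.mem_univ, true_and]
      tauto
    rw [Finset.sum_congr rfl hrw]
    have hswap : ∑ i ∈ ω, ∑ j ∈ ω, (if E i j then u i j * μ i j else 0)
        = ∑ i ∈ ω, ∑ j ∈ ω, (if E j i then u j i * μ j i else 0) := Finset.sum_comm
    have hneg : ∀ i ∈ ω, ∀ j ∈ ω, (if E j i then u j i * μ j i else 0)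
        = -(if E i j then u i j * μ i j else 0) := by
      intro i _ j _
      by_cases h : E i j
      · have h' : E j i := hEsymm _ _ h
        simp only [h, h', if_true]
        rw [hu i j h, hμ i j h]
        ring
      · have h' : ¬ E j i := fun hh => h (hEsymm _ _ hh)
        simp [h, h']
    have : ∑ i ∈ ω, ∑ j ∈ ω, (if E i j then u i j * μ i j else 0)
        = -∑ i ∈ ω, ∑ j ∈ ω, (if E i j then u i j * μ i j else 0) := by
      conv_lhs => rw [hswap]
      rw [← Finset.sum_neg_distrib]
      apply Finset.sum_congr rfl
      intro i hi
      rw [← Finset.sum_neg_distrib]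
      exact Finset.sum_congr rfl (fun j hj => hneg i hi j hj)
    linarith
  calc ∑ i ∈ ω, vol i * DIV i
      = ∑ i ∈ ω, ((∑ j ∈ Finset.univ.filter (fun j => E i j), u i j * μ i j) + β i) :=
        Finset.sum_congr rfl (fun i _ => hDIV i)
    _ = (∑ i ∈ ω, ∑ j ∈ Finset.univ.filter (fun j => E i j), u i j * μ i j)
        + ∑ i ∈ ω, β i := Finset.sum_add_distrib
    _ = ((∑ i ∈ ω, ∑ j ∈ Finset.univ.filter (fun j => E i j ∧ j ∈ ω), u i j * μ i j)
        + ∑ i ∈ ω, ∑ j ∈ Finset.univ.filter (fun j => E i j ∧ j ∉ ω), u i j * μ i j)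
        + ∑ i ∈ ω, β i := by
          rw [Finset.sum_congr rfl (fun i _ => key i), Finset.sum_add_distrib]
    _ = (∑ i ∈ ω, ∑ j ∈ Finset.univ.filter (fun j => E i j ∧ j ∉ ω), u i j * μ i j)
        + ∑ i ∈ ω, β i := by rw [interior, zero_add]
end

section
/- Let V be a finite set of virtual cell indices, E ⊆ V × V a symmetric relation (the virtual faces), n_F ≥ 1, t : V × V → ℝ^{n_F} with t(i,j) = t(j,i) for all (i,j) ∈ E (symmetric field moments, assumption T.3), μ : V × V → ℝ^{n_F} with μ(i,j) = -μ(j,i) for all (i,j) ∈ E (antisymmetric virtual face moments, assumption T.2), β : V → ℝ (boundary flux terms), and μ_i > 0 for each i ∈ V (virtual cell volumes, assumption T.1). Define the abstract meshfree mimetic divergence by μ_i·(DIV)_i := ∑_{j : (i,j) ∈ E} ⟨t(i,j), μ(i,j)⟩ + β_i, where ⟨·,·⟩ is the Euclidean inner product on ℝ^{n_F}. Then: (a) for every subset ω ⊆ V, ∑_{i ∈ ω} μ_i·(DIV)_i = ∑_{(i,j) ∈ E, i ∈ ω, j ∉ ω} ⟨t(i,j), μ(i,j)⟩ + ∑_{i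 ∈ ω} β_i (local conservation); and (b) ∑_{i ∈ V} μ_i·(DIV)_i = ∑_{i ∈ V} β_i (global conservation). -/
open Matrix in
/-- Local and global conservation of the abstract meshfree mimetic divergence (MMD):
with positive virtual cell volumes (T.1), antisymmetric virtual face moments (T.2)
and symmetric field moments (T.3), the MMD operator defined by contraction of the
field and face moments plus boundary terms satisfies the discrete divergence theorem
on every subset of cells, and global conservation on the whole cloud. -/
theorem stmt_3 {V : Type*} [Fintype V] [DecidableEq V] (nF : ℕ) (hnF : 1 ≤ nF)
    (E : V → V → Prop) [DecidableRel E]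
    (hEsymm : ∀ i j, E i j → E j i) (hEirr : ∀ i, ¬ E i i)
    (t : V → V → (Fin nF → ℝ)) (ht : ∀ i j, E i j → t i j = t j i)
    (μ : V → V → (Fin nF → ℝ)) (hμ : ∀ i j, E i j → μ i j = - μ j i)
    (β : V → ℝ) (vol : V → ℝ) (hvol : ∀ i, 0 < vol i)
    (DIV : V → ℝ)
    (hDIV : ∀ i, vol i * DIV i =
      (∑ j ∈ Finset.univ.filter (fun j => E i j), t i j ⬝ᵥ μ i j) + β i) :
    (∀ ω : Finset V,
      ∑ i ∈ ω, vol i * DIV i =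
        (∑ i ∈ ω, ∑ j ∈ Finset.univ.filter (fun j => E i j ∧ j ∉ ω), t i j ⬝ᵥ μ i j)
          + ∑ i ∈ ω, β i) ∧
    (∑ i : V, vol i * DIV i = ∑ i : V, β i) := by
  have hskew : ∀ i j, E i j → t j i ⬝ᵥ μ j i = -(t i j ⬝ᵥ μ i j) := by
    intro i j hij
    have hji := hEsymm i j hij
    rw [ht j i hji, hμ j i hji, dotProduct_neg]
  have key : ∀ ω : Finset V,
      (∑ i ∈ ω, ∑ j ∈ Finset.univ.filter (fun j => E i j ∧ j ∈ ω),
        t i j ⬝ᵥ μ i j) = 0 := by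
    intro ω
    have h1 : (∑ i ∈ ω, ∑ j ∈ Finset.univ.filter (fun j => E i j ∧ j ∈ ω),
        t i j ⬝ᵥ μ i j)
        = ∑ i ∈ ω, ∑ j ∈ ω, if E i j then t i j ⬝ᵥ μ i j else 0 := by
      refine Finset.sum_congr rfl (fun i hi => ?_)
      rw [show (Finset.univ.filter (fun j => E i j ∧ j ∈ ω)) = ω.filter (fun j => E i j)
        by ext j; simp [and_comm], Finset.sum_filter]
    have h2 : (∑ i ∈ ω, ∑ j ∈ ω, if E i j then t i j ⬝ᵥ μ i j else 0)
        = -∑ i ∈ ω, ∑ j ∈ ω, if E i j then t i j ⬝ᵥ μ i j else 0 := by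
      conv_lhs => rw [Finset.sum_comm]
      rw [← Finset.sum_neg_distrib]
      refine Finset.sum_congr rfl (fun i _ => ?_)
      rw [← Finset.sum_neg_distrib]
      refine Finset.sum_congr rfl (fun j _ => ?_)
      by_cases h : E i j
      · simp [h, hEsymm i j h, hskew i j h]
      · have : ¬ E j i := fun h' => h (hEsymm j i h')
        simp [h, this]
    have h3 : (∑ i ∈ ω, ∑ j ∈ ω, if E i j then t i j ⬝ᵥ μ i j else 0) = 0 :=
      by linarith [h2]
    rw [h1, h3]
  have local_cons : ∀ ω : Finset V,
      ∑ i ∈ ω, vol i * DIV i =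
        (∑ i ∈ ω, ∑ j ∈ Finset.univ.filter (fun j => E i j ∧ j ∉ ω), t i j ⬝ᵥ μ i j)
          + ∑ i ∈ ω, β i := by
    intro ω
    have split : ∀ i, (∑ j ∈ Finset.univ.filter (fun j => E i j), t i j ⬝ᵥ μ i j)
        = (∑ j ∈ Finset.univ.filter (fun j => E i j ∧ j ∈ ω), t i j ⬝ᵥ μ i j)
          + ∑ j ∈ Finset.univ.filter (fun j => E i j ∧ j ∉ ω), t i j ⬝ᵥ μ i j := by
      intro i
      rw [← Finset.sum_filter_add_sum_filter_not
        (Finset.univ.filter (fun j => E i j)) (fun j => j ∈ ω)]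
      congr 1 <;> · congr 1; ext j; simp [Finset.filter_filter]
    calc ∑ i ∈ ω, vol i * DIV i
        = ∑ i ∈ ω, ((∑ j ∈ Finset.univ.filter (fun j => E i j), t i j ⬝ᵥ μ i j) + β i) :=
          Finset.sum_congr rfl (fun i _ => hDIV i)
      _ = (∑ i ∈ ω, ∑ j ∈ Finset.univ.filter (fun j => E i j), t i j ⬝ᵥ μ i j)
            + ∑ i ∈ ω, β i := Finset.sum_add_distrib
      _ = ((∑ i ∈ ω, ∑ j ∈ Finset.univ.filter (fun j => E i j ∧ j ∈ ω), t i j ⬝ᵥ μ i j)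
            + ∑ i ∈ ω, ∑ j ∈ Finset.univ.filter (fun j => E i j ∧ j ∉ ω), t i j ⬝ᵥ μ i j)
            + ∑ i ∈ ω, β i := by
          rw [Finset.sum_congr rfl (fun i _ => split i), Finset.sum_add_distrib]
      _ = (∑ i ∈ ω, ∑ j ∈ Finset.univ.filter (fun j => E i j ∧ j ∉ ω), t i j ⬝ᵥ μ i j)
            + ∑ i ∈ ω, β i := by rw [key ω, zero_add]
  refine ⟨local_cons, ?_⟩
  have := local_cons Finset.univ
  simpa using this
end
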